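/- Conservativity over the intuitionistic fragment: let Γ ∪ {A} be a set of PML formulas containing no classical variables. Then Γ ⊢_pml A if and only if Γ ⊢_(i) A, i.e., the classical absurdity rule (⊥_c) can be completely dispensed with. -/

import Mathlib

namespace PML

/-- The three kinds of propositional variables: minimal, intuitionistic, classical. -/
inductive Kind : Type
  | m | i | c
deriving DecidableEq

/-- Formulas of propositional mixed logic (PML). -/
inductive Formula : Type
  | var : Kind → ℕ → Formula
  | bot : Formula
  | and : Formula → Formula → Formula
  | or : Formula → Formula → Formula
  | imp : Formula → Formula → Formula
deriving DecidableEq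

namespace Formula

/-- ¬A abbreviates A → ⊥. -/
def neg (A : Formula) : Formula := imp A bot

/-- All variables occurring in the formula have a kind satisfying `p`. -/
def onlyKinds (p : Kind → Prop) : Formula → Prop
  | var k _ => p k
  | bot => True
  | and A B => onlyKinds p A ∧ onlyKinds p B
  | or A B => onlyKinds p A ∧ onlyKinds p B
  | imp A B => onlyKinds p A ∧ onlyKinds p B

/-- A classical formula: only classical variables. -/
def IsClassical (A : Formula) : Prop := onlyKinds (fun k => k = Kind.c) A

/-- An intuitionistic formula: only intuitionistic and classical variables. -/
def IsIntuitionistic (A : Formula) : Prop := onlyKinds (fun k => k = Kind.i ∨ k = Kind.c) A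

/-- A formula without classical variables. -/
def NoClassicalVar (A : Formula) : Prop := onlyKinds (fun k => k ≠ Kind.c) A

/-- A formula without classical and without intuitionistic variables. -/
def OnlyMinimalVar (A : Formula) : Prop := onlyKinds (fun k => k = Kind.m) A

/-- A formula without intuitionistic variables. -/
def NoIntuitVar (A : Formula) : Prop := onlyKinds (fun k => k ≠ Kind.i) A

/-- Substitution of the formula `F` for every occurrence of the variable of kind `k`, index `n`. -/
def subst (F : Formula) (k : Kind) (n : ℕ) : Formula → Formula
  | var k' n' => if k' = k ∧ n' = n then F else var k' n'
  | bot => bot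
  | and A B => and (subst F k n A) (subst F k n B)
  | or A B => or (subst F k n A) (subst F k n B)
  | imp A B => imp (subst F k n A) (subst F k n B)

end Formula

/-- Which optional rules are available: the intuitionistic absurdity rule (⊥_i),
the classical absurdity rule (⊥_c), and whether (∨_E) is unrestricted
(`fullOrE = false` gives the PML^∨ restriction). -/
structure Rules where
  botI : Bool
  botC : Bool
  fullOrE : Bool

/-- Natural deduction for mixed logic, parametrized by the available rules. -/
inductive Deriv (R : Rules) : Set Formula → Formula → Prop
  | ax (A : Formula) : Deriv R {A} A
  | weak {Γ : Set Formula} {A : Formula} (B : Formula) : Deriv R Γ A → Deriv R (insert B Γ) A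
  | andI {Γ₁ Γ₂ : Set Formula} {A₁ A₂ : Formula} :
      Deriv R Γ₁ A₁ → Deriv R Γ₂ A₂ → Deriv R (Γ₁ ∪ Γ₂) (A₁.and A₂)
  | andE₁ {Γ : Set Formula} {A₁ A₂ : Formula} : Deriv R Γ (A₁.and A₂) → Deriv R Γ A₁
  | andE₂ {Γ : Set Formula} {A₁ A₂ : Formula} : Deriv R Γ (A₁.and A₂) → Deriv R Γ A₂
  | orI₁ {Γ : Set Formula} {A₁ : Formula} (A₂ : Formula) : Deriv R Γ A₁ → Deriv R Γ (A₁.or A₂)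
  | orI₂ {Γ : Set Formula} {A₂ : Formula} (A₁ : Formula) : Deriv R Γ A₂ → Deriv R Γ (A₁.or A₂)
  | orE {Γ₁ Γ₂ Γ₃ : Set Formula} {A₁ A₂ B : Formula} :
      (R.fullOrE = true ∨ ((A₁.or A₂).IsClassical → B.IsClassical)) →
      Deriv R Γ₁ (A₁.or A₂) → Deriv R (insert A₁ Γ₂) B → Deriv R (insert A₂ Γ₃) B →
      Deriv R (Γ₁ ∪ Γ₂ ∪ Γ₃) B
  | impI {Γ : Set Formula} {A₁ A₂ : Formula} : Deriv R (insert A₁ Γ) A₂ → Deriv R Γ (A₁.imp A₂)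
  | impE {Γ₁ Γ₂ : Set Formula} {A₁ A₂ : Formula} :
      Deriv R Γ₁ (A₁.imp A₂) → Deriv R Γ₂ A₁ → Deriv R (Γ₁ ∪ Γ₂) A₂
  | botI {Γ : Set Formula} {A : Formula} :
      R.botI = true → A.IsIntuitionistic → Deriv R Γ Formula.bot → Deriv R Γ A
  | botC {Γ : Set Formula} {A : Formula} :
      R.botC = true → A.IsClassical → Deriv R Γ (A.neg.neg) → Deriv R Γ A

/-- Γ ⊢_pml A : full mixed logic. -/
def DerivPML : Set Formula → Formula → Prop := Deriv ⟨true, true, true⟩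

/-- Γ ⊢_(i) A : derivable without the rule (⊥_c). -/
def DerivI : Set Formula → Formula → Prop := Deriv ⟨true, false, true⟩

/-- Γ ⊢_(m) A : derivable without the rules (⊥_i) and (⊥_c). -/
def DerivM : Set Formula → Formula → Prop := Deriv ⟨false, false, true⟩

/-- Γ ⊢_(i') A : derivable without the rule (⊥_i). -/
def DerivI' : Set Formula → Formula → Prop := Deriv ⟨false, true, true⟩

/-- Γ ⊢^∨ A : derivable in PML^∨ (restricted ∨-elimination). -/
def DerivVee : Set Formula → Formula → Prop := Deriv ⟨true, true, false⟩

/-- A Kripke frame over a poset `W`: a monotone forcing relation on atoms. -/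
structure KripkeFrame (W : Type) [PartialOrder W] where
  fvar : W → Kind → ℕ → Prop
  fbot : W → Prop
  mono_var : ∀ {a b : W} (k : Kind) (n : ℕ), a ≤ b → fvar a k n → fvar b k n
  mono_bot : ∀ {a b : W}, a ≤ b → fbot a → fbot b

variable {W : Type} [PartialOrder W]

/-- Forcing, extended to compound formulas. -/
def KripkeFrame.force (M : KripkeFrame W) : W → Formula → Prop
  | a, .var k n => M.fvar a k n
  | a, .bot => M.fbot a
  | a, .and A B => M.force a A ∧ M.force a B
  | a, .or A B => M.force a A ∨ M.force a B
  | a, .imp A B => ∀ b : W, a ≤ b → M.force b A → M.force b B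

/-- A formula is valid in a model iff it is forced at every node. -/
def KripkeFrame.Valid (M : KripkeFrame W) (A : Formula) : Prop := ∀ a : W, M.force a A

/-- A mixed Kripke model: (2) a node forcing ⊥ forces every intuitionistic or classical
variable; (3) a classical variable forced at a node not forcing ⊥ is forced everywhere. -/
def IsMixed (M : KripkeFrame W) : Prop :=
  (∀ (a : W) (k : Kind) (n : ℕ), M.fbot a → (k = Kind.i ∨ k = Kind.c) → M.fvar a k n) ∧
  (∀ (a : W) (n : ℕ), M.fvar a Kind.c n → ¬ M.fbot a → ∀ b : W, M.fvar b Kind.c n)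

/-- An intuitionistic mixed Kripke model: restricted to atoms in 𝒱_m ∪ 𝒱_i ∪ {⊥}
(no classical atom is forced) and a node forcing ⊥ forces every intuitionistic variable. -/
def IsIntMixed (M : KripkeFrame W) : Prop :=
  (∀ (a : W) (n : ℕ), ¬ M.fvar a Kind.c n) ∧
  (∀ (a : W) (n : ℕ), M.fbot a → M.fvar a Kind.i n)

/-- A minimal mixed Kripke model: restricted to atoms in 𝒱_m ∪ {⊥}. -/
def IsMinMixed (M : KripkeFrame W) : Prop :=
  (∀ (a : W) (n : ℕ), ¬ M.fvar a Kind.i n) ∧ (∀ (a : W) (n : ℕ), ¬ M.fvar a Kind.c n)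

/-- Semantic entailment: every mixed Kripke model validating all of Γ validates A. -/
def Entails (Γ : Set Formula) (A : Formula) : Prop :=
  ∀ (W : Type) [PartialOrder W] [Nonempty W] (M : KripkeFrame W),
    IsMixed M → (∀ B ∈ Γ, M.Valid B) → M.Valid A

/-- A saturated set of formulas. -/
def Saturated (Δ : Set Formula) : Prop :=
  ∀ C D : Formula, DerivPML Δ (C.or D) → C ∈ Δ ∨ D ∈ Δ

/-- The restriction 𝒦_(i) of a model to atoms in 𝒱_m ∪ 𝒱_i ∪ {⊥}. -/
def KripkeFrame.restrictI (M : KripkeFrame W) : KripkeFrame W where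
  fvar a k n := k ≠ Kind.c ∧ M.fvar a k n
  fbot := M.fbot
  mono_var := by
    intro a b k n hab h
    exact ⟨h.1, M.mono_var k n hab h.2⟩
  mono_bot := fun hab h => M.mono_bot hab h

/-- The restriction 𝒦_(m) of a model to atoms in 𝒱_m ∪ {⊥}. -/
def KripkeFrame.restrictM (M : KripkeFrame W) : KripkeFrame W where
  fvar a k n := k = Kind.m ∧ M.fvar a k n
  fbot := M.fbot
  mono_var := by
    intro a b k n hab h
    exact ⟨h.1, M.mono_var k n hab h.2⟩
  mono_bot := fun hab h => M.mono_bot hab h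

/-- The translation ^m : intuitionistic variables X_i are sent to ¬¬ m(X_i). -/
def Formula.transM (m : ℕ → ℕ) : Formula → Formula
  | .var Kind.i n => ((Formula.var Kind.m (m n)).neg).neg
  | .var k n => .var k n
  | .bot => .bot
  | .and A B => .and (Formula.transM m A) (Formula.transM m B)
  | .or A B => .or (Formula.transM m A) (Formula.transM m B)
  | .imp A B => .imp (Formula.transM m A) (Formula.transM m B)

/-- The translation ^i : classical variables X_c are sent to ¬¬ i(X_c), and
disjunctions are doubly negated. -/
def Formula.transI (f : ℕ → ℕ) : Formula → Formula
  | .var Kind.c n => ((Formula.var Kind.i (f n)).neg).neg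
  | .var k n => .var k n
  | .bot => .bot
  | .and A B => .and (Formula.transI f A) (Formula.transI f B)
  | .or A B => (((Formula.transI f A).or (Formula.transI f B)).neg).neg
  | .imp A B => .imp (Formula.transI f A) (Formula.transI f B)

/-!
Replacing every classical variable by ⊥ sends a PML derivation to a ⊢_(i) derivation. The only
rule that needs thought is (⊥_c): its conclusion, a classical formula, becomes variable-free, and a
variable-free formula is decidable with (⊥_i) alone, so ¬¬A → A is derivable for it. Formulas
without classical variables are left unchanged by the substitution.
-/

namespace Formula

theorem onlyKinds_mono {p q : Kind → Prop} (hpq : ∀ k, p k → q k) :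
    ∀ {A : Formula}, A.onlyKinds p → A.onlyKinds q
  | var k _, h => hpq k h
  | bot, _ => trivial
  | and _ _, h | or _ _, h | imp _ _, h => ⟨onlyKinds_mono hpq h.1, onlyKinds_mono hpq h.2⟩

def IsClosed (A : Formula) : Prop := A.onlyKinds fun _ => False

theorem IsClosed.isIntuitionistic {A : Formula} (h : A.IsClosed) : A.IsIntuitionistic :=
  onlyKinds_mono (fun _ => False.elim) h

def eraseClassical : Formula → Formula
  | var Kind.c _ => bot
  | var k n => var k n
  | bot => bot
  | and A B => and A.eraseClassical B.eraseClassical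
  | or A B => or A.eraseClassical B.eraseClassical
  | imp A B => imp A.eraseClassical B.eraseClassical

theorem IsClassical.eraseClassical_isClosed :
    ∀ {A : Formula}, A.IsClassical → A.eraseClassical.IsClosed
  | var Kind.c _, _ => trivial
  | bot, _ => trivial
  | and _ _, h | or _ _, h | imp _ _, h =>
    ⟨eraseClassical_isClosed h.1, eraseClassical_isClosed h.2⟩

theorem IsIntuitionistic.eraseClassical :
    ∀ {A : Formula}, A.IsIntuitionistic → A.eraseClassical.IsIntuitionistic
  | var Kind.m _, h => h
  | var Kind.i _, h => h
  | var Kind.c _, _ => trivial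
  | bot, _ => trivial
  | and _ _, h | or _ _, h | imp _ _, h => ⟨eraseClassical h.1, eraseClassical h.2⟩

theorem NoClassicalVar.eraseClassical_eq :
    ∀ {A : Formula}, A.NoClassicalVar → A.eraseClassical = A
  | var Kind.m _, _ | var Kind.i _, _ => rfl
  | var Kind.c _, h => absurd rfl h
  | bot, _ => rfl
  | and _ _, h | or _ _, h | imp _ _, h => by
    simp only [Formula.eraseClassical, eraseClassical_eq h.1, eraseClassical_eq h.2]

end Formula

namespace Deriv

variable {R : Rules} {Γ : Set Formula} {A B : Formula}

theorem assume (A : Formula) : Deriv R (insert A ∅) A := by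
  simpa using ax (R := R) A

theorem mp (hAB : Deriv R ∅ (A.imp B)) (hA : Deriv R Γ A) : Deriv R Γ B := by
  simpa using impE hAB hA

theorem neg_of_imp (hAB : Deriv R ∅ (A.imp B)) (hB : Deriv R ∅ B.neg) : Deriv R ∅ A.neg :=
  impI (mp hB (mp hAB (assume A)))

theorem neg_bot : Deriv R ∅ Formula.bot.neg :=
  impI (assume _)

theorem neg_or (hA : Deriv R ∅ A.neg) (hB : Deriv R ∅ B.neg) : Deriv R ∅ (A.or B).neg := by
  refine impI ?_
  simpa using orE (.inr fun _ => show Formula.bot.IsClassical from trivial) (assume (A.or B))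
    (mp hA (assume A)) (mp hB (assume B))

theorem neg_imp (hA : Deriv R ∅ A) (hB : Deriv R ∅ B.neg) : Deriv R ∅ (A.imp B).neg :=
  neg_of_imp (impI (by simpa using impE (assume (A.imp B)) hA)) hB

theorem imp_of_neg (hR : R.botI = true) (hB : B.IsIntuitionistic) (hA : Deriv R ∅ A.neg) :
    Deriv R ∅ (A.imp B) :=
  impI (botI hR hB (mp hA (assume A)))

theorem or_neg_of_isClosed (hR : R.botI = true) :
    ∀ {A : Formula}, A.IsClosed → Deriv R ∅ A ∨ Deriv R ∅ A.neg
  | .bot, _ => .inr neg_bot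
  | .and A B, ⟨hA, hB⟩ => by
    rcases or_neg_of_isClosed hR hA with dA | dA
    · rcases or_neg_of_isClosed hR hB with dB | dB
      · exact .inl (by simpa using andI dA dB)
      · exact .inr (neg_of_imp (impI (andE₂ (assume (A.and B)))) dB)
    · exact .inr (neg_of_imp (impI (andE₁ (assume (A.and B)))) dA)
  | .or A B, ⟨hA, hB⟩ => by
    rcases or_neg_of_isClosed hR hA with dA | dA
    · exact .inl (orI₁ B dA)
    rcases or_neg_of_isClosed hR hB with dB | dB
    · exact .inl (orI₂ A dB)
    · exact .inr (neg_or dA dB)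
  | .imp A B, ⟨hA, hB⟩ => by
    rcases or_neg_of_isClosed hR hB with dB | dB
    · exact .inl (impI (weak A dB))
    rcases or_neg_of_isClosed hR hA with dA | dA
    · exact .inr (neg_imp dA dB)
    · exact .inl (imp_of_neg hR (Formula.IsClosed.isIntuitionistic hB) dA)

theorem dne_of_isClosed (hR : R.botI = true) (hA : A.IsClosed) :
    Deriv R ∅ (A.neg.neg.imp A) := by
  rcases or_neg_of_isClosed hR hA with dA | dA
  · exact impI (weak _ dA)
  · exact imp_of_neg hR hA.isIntuitionistic (impI (by simpa using impE (assume A.neg.neg) dA))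

theorem mono {R' : Rules} (hI : R.botI = true → R'.botI = true)
    (hC : R.botC = true → R'.botC = true) (hOr : R.fullOrE = true → R'.fullOrE = true)
    (h : Deriv R Γ A) : Deriv R' Γ A := by
  induction h with
  | ax A => exact ax A
  | weak B _ ih => exact weak B ih
  | andI _ _ ih₁ ih₂ => exact andI ih₁ ih₂
  | andE₁ _ ih => exact andE₁ ih
  | andE₂ _ ih => exact andE₂ ih
  | orI₁ A₂ _ ih => exact orI₁ A₂ ih
  | orI₂ A₁ _ ih => exact orI₂ A₁ ih
  | orE hside _ _ _ ih₁ ih₂ ih₃ => exact orE (hside.imp_left hOr) ih₁ ih₂ ih₃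
  | impI _ ih => exact impI ih
  | impE _ _ ih₁ ih₂ => exact impE ih₁ ih₂
  | botI hR hA _ ih => exact botI (hI hR) hA ih
  | botC hR hA _ ih => exact botC (hC hR) hA ih

theorem eraseClassical (h : Deriv R Γ A) :
    DerivI (Formula.eraseClassical '' Γ) A.eraseClassical := by
  unfold DerivI
  induction h with
  | ax A => simpa only [Set.image_singleton] using ax A.eraseClassical
  | weak B _ ih => simpa only [Set.image_insert_eq] using weak _ ih
  | andI _ _ ih₁ ih₂ =>
    rw [Set.image_union]
    exact andI ih₁ ih₂
  | andE₁ _ ih => exact andE₁ ih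
  | andE₂ _ ih => exact andE₂ ih
  | orI₁ A₂ _ ih => exact orI₁ _ ih
  | orI₂ A₁ _ ih => exact orI₂ _ ih
  | orE _ _ _ _ ih₁ ih₂ ih₃ =>
    rw [Set.image_insert_eq] at ih₂ ih₃
    rw [Set.image_union, Set.image_union]
    exact orE (Or.inl rfl) ih₁ ih₂ ih₃
  | impI _ ih =>
    rw [Set.image_insert_eq] at ih
    exact impI ih
  | impE _ _ ih₁ ih₂ =>
    rw [Set.image_union]
    exact impE ih₁ ih₂
  | botI _ hA _ ih => exact botI rfl hA.eraseClassical ih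
  | botC _ hA _ ih => exact mp (dne_of_isClosed rfl hA.eraseClassical_isClosed) ih

end Deriv

end PML

/-- Conservativity over the intuitionistic fragment: for Γ ∪ {A} without classical
variables, Γ ⊢_pml A iff Γ ⊢_(i) A. -/
theorem PML.conservativity_intuitionistic (Γ : Set PML.Formula) (A : PML.Formula)
    (hΓ : ∀ B ∈ Γ, B.NoClassicalVar) (hA : A.NoClassicalVar) :
    PML.DerivPML Γ A ↔ PML.DerivI Γ A := by
  refine ⟨fun h => ?_, PML.Deriv.mono (fun _ => rfl) (fun h => nomatch h) (fun _ => rfl)⟩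
  have hΓ_fixed : PML.Formula.eraseClassical '' Γ = Γ :=
    Set.EqOn.image_eq_self fun B hB => (hΓ B hB).eraseClassical_eq
  simpa only [hΓ_fixed, hA.eraseClassical_eq] using h.eraseClassical
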